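/- Let Ω = (a,b) × (c,d) ⊆ ℝ² be an open rectangle containing (x₀,t₀), ν : Ω → ℝ, and let f : Ω → ℝ be a positive twice continuously differentiable solution of f_xx − f_tt = νf on Ω; set η = −ν + 2(f_x² − f_t²)/f². Let v : Ω → ℝ be a twice continuously differentiable solution of v_xx − v_tt = ηv on Ω. Write j·f⁻²·∂_z̄(f·v) = Φ₁ + jΦ₂, and for a real constant c define u(x,t) = −f(x,t)·[2(∫_{x₀}^{x} Φ₁(η′,t) dη′ − ∫_{t₀}^{t} Φ₂(x₀,ξ) dξ) + c]. Then W = u + jv satisfies the main Vekua equation W_z̄ = (f_z̄/f)·W̄ on Ω and u satisfies the Klein-Gordon equation u_xx − u_tt = νu on Ω; moreover u is unique up to an additive term c·f with c a real constant. -/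

import Mathlib

/-!
Put `F = f v`. The two Klein–Gordon equations are exactly what makes the form
`(F_t dx + F_x dt) / f²` closed, so on the rectangle it has a potential `g`, obtained by
integrating along a vertical and then a horizontal segment; the given `u` is `f g` up to `c₀ f`.
Dividing by `f` turns the main Vekua equation for `u + jv` into `(u / f)_x = F_t / f²`,
`(u / f)_t = F_x / f²`. This gives the Vekua equation for `f g`, and uniqueness up to `c f`
because two potentials of the same form differ by a constant. Finally `□(f g) = (□f) g`: the
first-order cross terms cancel, and what remains of `g`'s second derivatives is `F_tx - F_xt = 0`.
-/

noncomputable section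

open Filter Topology MeasureTheory

/-- Hyperbolic (duplex) numbers 𝔻, modeled as pairs `(Re z, Im z)` with `j ^ 2 = 1`. -/
abbrev Hyp : Type := ℝ × ℝ

/-- Real part of a hyperbolic number. -/
def hre (a : Hyp) : ℝ := a.1

/-- Imaginary part of a hyperbolic number. -/
def him (a : Hyp) : ℝ := a.2

/-- The hyperbolic imaginary unit `j`. -/
def hj : Hyp := (0, 1)

/-- Hyperbolic multiplication: `(x+tj)(x'+t'j) = (xx'+tt') + (xt'+tx')j`. -/
def hmul (a b : Hyp) : Hyp := (a.1 * b.1 + a.2 * b.2, a.1 * b.2 + a.2 * b.1)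

/-- Hyperbolic conjugation: `conj (x+tj) = x - tj`. -/
def hconj (a : Hyp) : Hyp := (a.1, -a.2)

/-- Invertibility of a hyperbolic number: `x² ≠ t²`. -/
def IsInv (a : Hyp) : Prop := a.1 ^ 2 ≠ a.2 ^ 2

/-- Hyperbolic inverse `z⁻¹ = z̄ / |z|²` with `|z|² = x² - t²`. -/
def hinv (a : Hyp) : Hyp := (a.1 / (a.1 ^ 2 - a.2 ^ 2), -a.2 / (a.1 ^ 2 - a.2 ^ 2))

/-- Hyperbolic division. -/
def hdiv (a b : Hyp) : Hyp := hmul a (hinv b)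

/-- Partial derivative in the first (`x`) variable. -/
def pdx (g : Hyp → ℝ) (p : Hyp) : ℝ := deriv (fun s => g (s, p.2)) p.1

/-- Partial derivative in the second (`t`) variable. -/
def pdt (g : Hyp → ℝ) (p : Hyp) : ℝ := deriv (fun s => g (p.1, s)) p.2

/-- The wave operator `□g = g_xx - g_tt`. -/
def waveOp (g : Hyp → ℝ) (p : Hyp) : ℝ := pdx (pdx g) p - pdt (pdt g) p

/-- `w_z = ½(∂_x + j ∂_t) w = ½((u_x+v_t) + (v_x+u_t)j)` for a 𝔻-valued `w = u + jv`. -/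
def dz (w : Hyp → Hyp) (p : Hyp) : Hyp :=
  ((pdx (fun q => (w q).1) p + pdt (fun q => (w q).2) p) / 2,
   (pdx (fun q => (w q).2) p + pdt (fun q => (w q).1) p) / 2)

/-- `w_z̄ = ½(∂_x - j ∂_t) w = ½((u_x-v_t) + (v_x-u_t)j)` for a 𝔻-valued `w = u + jv`. -/
def dzbar (w : Hyp → Hyp) (p : Hyp) : Hyp :=
  ((pdx (fun q => (w q).1) p - pdt (fun q => (w q).2) p) / 2,
   (pdx (fun q => (w q).2) p - pdt (fun q => (w q).1) p) / 2)

/-- `f_z = ½(f_x + j f_t)` for a real-valued `f`. -/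
def rz (f : Hyp → ℝ) (p : Hyp) : Hyp := (pdx f p / 2, pdt f p / 2)

/-- `f_z̄ = ½(f_x - j f_t)` for a real-valued `f`. -/
def rzbar (f : Hyp → ℝ) (p : Hyp) : Hyp := (pdx f p / 2, -(pdt f p) / 2)

/-- 𝔻-differentiability at `z₀`: the difference quotient `(f z - f z₀)·(z - z₀)⁻¹`
tends to `d` as `z → z₀` through points with `z - z₀` invertible. -/
def HasHDerivAt (f : Hyp → Hyp) (d : Hyp) (z₀ : Hyp) : Prop :=
  Filter.Tendsto (fun z => hmul (f z - f z₀) (hinv (z - z₀)))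
    (nhdsWithin z₀ {z | IsInv (z - z₀)}) (nhds d)

/-- `F Ḡ - F̄ G`. -/
def pairDenom (F G : Hyp → Hyp) (z : Hyp) : Hyp :=
  hmul (F z) (hconj (G z)) - hmul (hconj (F z)) (G z)

/-- Characteristic coefficient `a_(F,G) = -(F̄ G_z̄ - F_z̄ Ḡ)/(F Ḡ - F̄ G)`. -/
def aFG (F G : Hyp → Hyp) (z : Hyp) : Hyp :=
  - hdiv (hmul (hconj (F z)) (dzbar G z) - hmul (dzbar F z) (hconj (G z))) (pairDenom F G z)

/-- Characteristic coefficient `b_(F,G) = (F G_z̄ - F_z̄ G)/(F Ḡ - F̄ G)`. -/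
def bFG (F G : Hyp → Hyp) (z : Hyp) : Hyp :=
  hdiv (hmul (F z) (dzbar G z) - hmul (dzbar F z) (G z)) (pairDenom F G z)

/-- Characteristic coefficient `A_(F,G) = -(F̄ G_z - F_z Ḡ)/(F Ḡ - F̄ G)`. -/
def AFG (F G : Hyp → Hyp) (z : Hyp) : Hyp :=
  - hdiv (hmul (hconj (F z)) (dz G z) - hmul (dz F z) (hconj (G z))) (pairDenom F G z)

/-- Characteristic coefficient `B_(F,G) = (F G_z - F_z G)/(F Ḡ - F̄ G)`. -/
def BFG (F G : Hyp → Hyp) (z : Hyp) : Hyp :=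
  hdiv (hmul (F z) (dz G z) - hmul (dz F z) (G z)) (pairDenom F G z)

/-- A generating pair on `Ω`: twice continuously differentiable `F, G` with `Im(F̄G) ≠ 0`. -/
def IsGenPair (F G : Hyp → Hyp) (Ω : Set Hyp) : Prop :=
  ContDiffOn ℝ 2 F Ω ∧ ContDiffOn ℝ 2 G Ω ∧ ∀ z ∈ Ω, him (hmul (hconj (F z)) (G z)) ≠ 0

/-- The idempotent `e₁ = (1+j)/2`. -/
def e1 : Hyp := (1/2, 1/2)

/-- The idempotent `e₂ = (1-j)/2`. -/
def e2 : Hyp := (1/2, -1/2)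

/-- Contour integral `∮_{∂R} h dz` over the counterclockwise boundary of the rectangle
`[x₁,x₂] × [t₁,t₂]`, with hyperbolic multiplication (`dz = dx` on horizontal sides,
`dz = j dt` on vertical sides). -/
def rectContourInt (h : Hyp → Hyp) (x₁ x₂ t₁ t₂ : ℝ) : Hyp :=
  ((∫ x in x₁..x₂, h (x, t₁)) - ∫ x in x₁..x₂, h (x, t₂)) +
    hmul hj ((∫ t in t₁..t₂, h (x₂, t)) - ∫ t in t₁..t₂, h (x₁, t))

/-- Integral `∫_{[z₀,z]} h dζ` along the straight segment from `z₀` to `z`,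
with hyperbolic multiplication. -/
def segInt (h : Hyp → Hyp) (z₀ z : Hyp) : Hyp :=
  ∫ s in (0:ℝ)..1, hmul (h (z₀ + s • (z - z₀))) (z - z₀)

/-- Natural powers in 𝔻. -/
def hpow (a : Hyp) : ℕ → Hyp
  | 0 => (1, 0)
  | n + 1 => hmul a (hpow a n)

/-- Integer powers in 𝔻 (for invertible base). -/
def hzpow (a : Hyp) : ℤ → Hyp
  | Int.ofNat n => hpow a n
  | Int.negSucc n => hinv (hpow a (n + 1))

section OneVariable

variable {f g v B G : ℝ → ℝ} {x : ℝ}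

theorem deriv_deriv_mul (hf : ∀ᶠ y in 𝓝 x, DifferentiableAt ℝ f y)
    (hv : ∀ᶠ y in 𝓝 x, DifferentiableAt ℝ v y) (hf' : DifferentiableAt ℝ (deriv f) x)
    (hv' : DifferentiableAt ℝ (deriv v) x) :
    deriv (deriv fun y => f y * v y) x =
      deriv (deriv f) x * v x + 2 * (deriv f x * deriv v x) + f x * deriv (deriv v) x := by
  have hd : deriv (fun y => f y * v y) =ᶠ[𝓝 x] fun y => deriv f y * v y + f y * deriv v y := by
    filter_upwards [hf, hv] with y hfy hvy
    exact deriv_mul hfy hvy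
  rw [hd.deriv_eq, ((hf'.hasDerivAt.fun_mul hv.self_of_nhds.hasDerivAt).fun_add
    (hf.self_of_nhds.hasDerivAt.fun_mul hv'.hasDerivAt)).deriv]
  ring

theorem deriv_div_sq (hG : DifferentiableAt ℝ G x) (hf : DifferentiableAt ℝ f x)
    (hx : f x ≠ 0) :
    deriv (fun y => G y / f y ^ 2) x = deriv G x / f x ^ 2 - 2 * G x * deriv f x / f x ^ 3 := by
  rw [(hG.hasDerivAt.fun_div (hf.hasDerivAt.fun_pow 2) (pow_ne_zero 2 hx)).deriv]
  field_simp
  ring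

/-- The cross terms `f' g'` and `-B f' / f²` cancel. -/
theorem deriv_deriv_mul_of_hasDerivAt_div_sq (hf : ∀ᶠ y in 𝓝 x, DifferentiableAt ℝ f y)
    (hf' : DifferentiableAt ℝ (deriv f) x) (hx : f x ≠ 0)
    (hg : ∀ᶠ y in 𝓝 x, HasDerivAt g (B y / f y ^ 2) y) (hB : DifferentiableAt ℝ B x) :
    deriv (deriv fun y => f y * g y) x = deriv (deriv f) x * g x + deriv B x / f x := by
  have hd : deriv (fun y => f y * g y) =ᶠ[𝓝 x] fun y => deriv f y * g y + B y / f y := by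
    filter_upwards [hf, hg] with y hfy hgy
    rw [(hfy.hasDerivAt.fun_mul hgy).deriv]
    rcases eq_or_ne (f y) 0 with hy | hy
    · simp [hy]
    · field_simp
  rw [hd.deriv_eq, ((hf'.hasDerivAt.fun_mul hg.self_of_nhds).fun_add
    (hB.hasDerivAt.fun_div hf.self_of_nhds.hasDerivAt hx)).deriv]
  field_simp
  ring

end OneVariable

section PartialDerivatives

variable {Ω : Set Hyp} {g h : Hyp → ℝ} {p : Hyp}

theorem hasDerivAt_pdx (hg : DifferentiableAt ℝ g p) :
    HasDerivAt (fun s => g (s, p.2)) (pdx g p) p.1 :=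
  (hg.comp p.1 (by fun_prop)).hasDerivAt

theorem hasDerivAt_pdt (hg : DifferentiableAt ℝ g p) :
    HasDerivAt (fun s => g (p.1, s)) (pdt g p) p.2 :=
  (hg.comp p.2 (by fun_prop)).hasDerivAt

theorem pdx_eq_fderiv (hg : DifferentiableAt ℝ g p) : pdx g p = fderiv ℝ g p (1, 0) :=
  (hg.hasFDerivAt.comp_hasDerivAt p.1 ((hasDerivAt_id p.1).prodMk (hasDerivAt_const p.1 p.2))).deriv

theorem pdt_eq_fderiv (hg : DifferentiableAt ℝ g p) : pdt g p = fderiv ℝ g p (0, 1) :=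
  (hg.hasFDerivAt.comp_hasDerivAt p.2 ((hasDerivAt_const p.2 p.1).prodMk (hasDerivAt_id p.2))).deriv

theorem Filter.EventuallyEq.pdx_eq (hgh : g =ᶠ[𝓝 p] h) : pdx g p = pdx h p :=
  (hgh.comp_tendsto
    (by fun_prop : Continuous fun s : ℝ => ((s, p.2) : Hyp)).continuousAt).deriv_eq

theorem Filter.EventuallyEq.pdt_eq (hgh : g =ᶠ[𝓝 p] h) : pdt g p = pdt h p :=
  (hgh.comp_tendsto
    (by fun_prop : Continuous fun s : ℝ => ((p.1, s) : Hyp)).continuousAt).deriv_eq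

theorem pdx_mul (hg : DifferentiableAt ℝ g p) (hh : DifferentiableAt ℝ h p) :
    pdx (fun q => g q * h q) p = pdx g p * h p + g p * pdx h p :=
  ((hasDerivAt_pdx hg).mul (hasDerivAt_pdx hh)).deriv

theorem pdt_mul (hg : DifferentiableAt ℝ g p) (hh : DifferentiableAt ℝ h p) :
    pdt (fun q => g q * h q) p = pdt g p * h p + g p * pdt h p :=
  ((hasDerivAt_pdt hg).mul (hasDerivAt_pdt hh)).deriv

theorem IsOpen.eventually_mem_fst (hΩ : IsOpen Ω) (hp : p ∈ Ω) :
    ∀ᶠ s in 𝓝 p.1, (s, p.2) ∈ Ω :=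
  (continuous_id.prodMk continuous_const).continuousAt.preimage_mem_nhds (hΩ.mem_nhds hp)

theorem IsOpen.eventually_mem_snd (hΩ : IsOpen Ω) (hp : p ∈ Ω) :
    ∀ᶠ s in 𝓝 p.2, (p.1, s) ∈ Ω :=
  (continuous_const.prodMk continuous_id).continuousAt.preimage_mem_nhds (hΩ.mem_nhds hp)

variable {m n : WithTop ℕ∞}

theorem ContDiffOn.pdx (hg : ContDiffOn ℝ n g Ω) (hΩ : IsOpen Ω) (hmn : m + 1 ≤ n) :
    ContDiffOn ℝ m (pdx g) Ω :=
  ((hg.fderiv_of_isOpen hΩ hmn).clm_apply contDiffOn_const).congr fun _ hq =>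
    pdx_eq_fderiv ((hg.differentiableOn (ne_bot_of_le_ne_bot (by simp) hmn)).differentiableAt
      (hΩ.mem_nhds hq))

theorem ContDiffOn.pdt (hg : ContDiffOn ℝ n g Ω) (hΩ : IsOpen Ω) (hmn : m + 1 ≤ n) :
    ContDiffOn ℝ m (pdt g) Ω :=
  ((hg.fderiv_of_isOpen hΩ hmn).clm_apply contDiffOn_const).congr fun _ hq =>
    pdt_eq_fderiv ((hg.differentiableOn (ne_bot_of_le_ne_bot (by simp) hmn)).differentiableAt
      (hΩ.mem_nhds hq))

theorem pdx_pdt_comm (hg : ContDiffOn ℝ 2 g Ω) (hΩ : IsOpen Ω) (hp : p ∈ Ω) :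
    pdx (pdt g) p = pdt (pdx g) p := by
  have hdiff : ∀ q ∈ Ω, DifferentiableAt ℝ g q := fun q hq =>
    (hg.differentiableOn two_ne_zero).differentiableAt (hΩ.mem_nhds hq)
  have hg' : DifferentiableAt ℝ (fderiv ℝ g) p :=
    ((hg.fderiv_of_isOpen hΩ le_rfl).differentiableOn one_ne_zero).differentiableAt
      (hΩ.mem_nhds hp)
  have hsymm := (hg.contDiffAt (hΩ.mem_nhds hp)).isSymmSndFDerivAt (n := 2) (by simp)
  have ht : pdt g =ᶠ[𝓝 p] fun q => fderiv ℝ g q (0, 1) :=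
    eventually_of_mem (hΩ.mem_nhds hp) fun q hq => pdt_eq_fderiv (hdiff q hq)
  have hx : pdx g =ᶠ[𝓝 p] fun q => fderiv ℝ g q (1, 0) :=
    eventually_of_mem (hΩ.mem_nhds hp) fun q hq => pdx_eq_fderiv (hdiff q hq)
  rw [ht.pdx_eq, hx.pdt_eq, pdx_eq_fderiv (hg'.clm_apply (differentiableAt_const _)),
    pdt_eq_fderiv (hg'.clm_apply (differentiableAt_const _)),
    fderiv_clm_apply hg' (differentiableAt_const _),
    fderiv_clm_apply hg' (differentiableAt_const _)]
  simpa using hsymm (1, 0) (0, 1)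

theorem ContDiffOn.eventually_differentiableAt_fst (hg : ContDiffOn ℝ n g Ω) (hn : n ≠ 0)
    (hΩ : IsOpen Ω) (hp : p ∈ Ω) :
    ∀ᶠ s in 𝓝 p.1, DifferentiableAt ℝ (fun r => g (r, p.2)) s :=
  (hΩ.eventually_mem_fst hp).mono fun _ hs =>
    (hasDerivAt_pdx ((hg.differentiableOn hn).differentiableAt (hΩ.mem_nhds hs))).differentiableAt

theorem ContDiffOn.eventually_differentiableAt_snd (hg : ContDiffOn ℝ n g Ω) (hn : n ≠ 0)
    (hΩ : IsOpen Ω) (hp : p ∈ Ω) :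
    ∀ᶠ s in 𝓝 p.2, DifferentiableAt ℝ (fun r => g (p.1, r)) s :=
  (hΩ.eventually_mem_snd hp).mono fun _ hs =>
    (hasDerivAt_pdt ((hg.differentiableOn hn).differentiableAt (hΩ.mem_nhds hs))).differentiableAt

theorem ContDiffOn.differentiableAt_pdx (hg : ContDiffOn ℝ 2 g Ω) (hΩ : IsOpen Ω)
    (hp : p ∈ Ω) :
    DifferentiableAt ℝ (_root_.pdx g) p :=
  ((hg.pdx hΩ le_rfl).differentiableOn one_ne_zero).differentiableAt (hΩ.mem_nhds hp)

theorem ContDiffOn.differentiableAt_pdt (hg : ContDiffOn ℝ 2 g Ω) (hΩ : IsOpen Ω)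
    (hp : p ∈ Ω) :
    DifferentiableAt ℝ (_root_.pdt g) p :=
  ((hg.pdt hΩ le_rfl).differentiableOn one_ne_zero).differentiableAt (hΩ.mem_nhds hp)

theorem pdx_pdx_mul (hg : ContDiffOn ℝ 2 g Ω) (hh : ContDiffOn ℝ 2 h Ω) (hΩ : IsOpen Ω)
    (hp : p ∈ Ω) : pdx (pdx fun q => g q * h q) p =
      pdx (pdx g) p * h p + 2 * (pdx g p * pdx h p) + g p * pdx (pdx h) p :=
  deriv_deriv_mul (hg.eventually_differentiableAt_fst two_ne_zero hΩ hp)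
    (hh.eventually_differentiableAt_fst two_ne_zero hΩ hp)
    (hasDerivAt_pdx (hg.differentiableAt_pdx hΩ hp)).differentiableAt
    (hasDerivAt_pdx (hh.differentiableAt_pdx hΩ hp)).differentiableAt

theorem pdt_pdt_mul (hg : ContDiffOn ℝ 2 g Ω) (hh : ContDiffOn ℝ 2 h Ω) (hΩ : IsOpen Ω)
    (hp : p ∈ Ω) : pdt (pdt fun q => g q * h q) p =
      pdt (pdt g) p * h p + 2 * (pdt g p * pdt h p) + g p * pdt (pdt h) p :=
  deriv_deriv_mul (hg.eventually_differentiableAt_snd two_ne_zero hΩ hp)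
    (hh.eventually_differentiableAt_snd two_ne_zero hΩ hp)
    (hasDerivAt_pdt (hg.differentiableAt_pdt hΩ hp)).differentiableAt
    (hasDerivAt_pdt (hh.differentiableAt_pdt hΩ hp)).differentiableAt

theorem waveOp_mul (hg : ContDiffOn ℝ 2 g Ω) (hh : ContDiffOn ℝ 2 h Ω) (hΩ : IsOpen Ω)
    (hp : p ∈ Ω) : waveOp (fun q => g q * h q) p =
      waveOp g p * h p + 2 * (pdx g p * pdx h p - pdt g p * pdt h p) + g p * waveOp h p := by
  rw [waveOp, waveOp, waveOp, pdx_pdx_mul hg hh hΩ hp, pdt_pdt_mul hg hh hΩ hp]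
  ring

end PartialDerivatives

section Rectangle

variable {s t : Set ℝ} {P Q : Hyp → ℝ}

theorem ContinuousOn.comp_fst_slice (hP : ContinuousOn P (s ×ˢ t)) {τ : ℝ} (hτ : τ ∈ t) :
    ContinuousOn (fun y => P (y, τ)) s :=
  hP.comp (by fun_prop) fun _ hy => ⟨hy, hτ⟩

theorem ContinuousOn.comp_snd_slice (hP : ContinuousOn P (s ×ˢ t)) {x : ℝ} (hx : x ∈ s) :
    ContinuousOn (fun r => P (x, r)) t :=
  hP.comp (by fun_prop) fun _ hr => ⟨hx, hr⟩

variable [s.OrdConnected]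

theorem hasDerivAt_integral_of_continuousOn {φ : ℝ → ℝ} (hs : IsOpen s)
    (hφ : ContinuousOn φ s) {a x : ℝ} (ha : a ∈ s) (hx : x ∈ s) :
    HasDerivAt (fun r => ∫ y in a..r, φ y) (φ x) x :=
  intervalIntegral.integral_hasDerivAt_right
    ((hφ.mono (Set.OrdConnected.uIcc_subset ‹_› ha hx)).intervalIntegrable)
    (hφ.stronglyMeasurableAtFilter hs x hx) (hφ.continuousAt (hs.mem_nhds hx))

theorem eq_of_hasDerivAt_slices_eq_zero [t.OrdConnected] (hs : IsOpen s) (ht : IsOpen t)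
    {h : Hyp → ℝ} (hx : ∀ q ∈ s ×ˢ t, HasDerivAt (fun r => h (r, q.2)) 0 q.1)
    (hy : ∀ q ∈ s ×ˢ t, HasDerivAt (fun r => h (q.1, r)) 0 q.2)
    {p q : Hyp} (hp : p ∈ s ×ˢ t) (hq : q ∈ s ×ˢ t) : h p = h q := by
  have horiz : h p = h (q.1, p.2) :=
    hs.is_const_of_deriv_eq_zero (f := fun r => h (r, p.2)) ‹s.OrdConnected›.isPreconnected
      (fun r hr => (hx (r, p.2) ⟨hr, hp.2⟩).differentiableAt.differentiableWithinAt)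
      (fun r hr => (hx (r, p.2) ⟨hr, hp.2⟩).deriv) hp.1 hq.1
  have vert : h (q.1, p.2) = h q :=
    ht.is_const_of_deriv_eq_zero (f := fun r => h (q.1, r)) ‹t.OrdConnected›.isPreconnected
      (fun r hr => (hy (q.1, r) ⟨hq.1, hr⟩).differentiableAt.differentiableWithinAt)
      (fun r hr => (hy (q.1, r) ⟨hq.1, hr⟩).deriv) hp.2 hq.2
  exact horiz.trans vert

variable {x₀ t₀ : ℝ} {p : Hyp}

theorem hasDerivAt_integral_param (hs : IsOpen s) (ht : IsOpen t)
    (hP : ContDiffOn ℝ 1 P (s ×ˢ t)) {x : ℝ} (hx₀ : x₀ ∈ s) (hx : x ∈ s) {τ : ℝ}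
    (hτ : τ ∈ t) :
    HasDerivAt (fun r => ∫ y in x₀..x, P (y, r)) (∫ y in x₀..x, pdt P (y, τ)) τ := by
  have hst : IsOpen (s ×ˢ t) := hs.prod ht
  have hI : Set.uIcc x₀ x ⊆ s := Set.OrdConnected.uIcc_subset ‹_› hx₀ hx
  obtain ⟨ε, hε, hball⟩ := Metric.nhds_basis_closedBall.mem_iff.1 (ht.mem_nhds hτ)
  obtain ⟨M, hM⟩ :=
    (isCompact_uIcc.prod (isCompact_closedBall τ ε)).exists_bound_of_continuousOn
    ((hP.pdt (m := 0) hst (by simp)).continuousOn.mono (Set.prod_mono hI hball))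
  refine (intervalIntegral.hasDerivAt_integral_of_dominated_loc_of_deriv_le
    (F' := fun r y => pdt P (y, r)) (bound := fun _ => M) (Metric.closedBall_mem_nhds τ hε)
    ?_ ?_ ?_ ?_ intervalIntegrable_const ?_).2
  · filter_upwards [ht.mem_nhds hτ] with r hr
    exact ((hP.continuousOn.comp_fst_slice hr).mono (Set.uIoc_subset_uIcc.trans hI))
      |>.aestronglyMeasurable measurableSet_uIoc
  · exact ((hP.continuousOn.comp_fst_slice hτ).mono hI).intervalIntegrable
  · exact (((hP.pdt (m := 0) hst (by simp)).continuousOn.comp_fst_slice hτ).mono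
      (Set.uIoc_subset_uIcc.trans hI)).aestronglyMeasurable measurableSet_uIoc
  · exact Filter.Eventually.of_forall fun y hy r hr =>
      hM (y, r) ⟨Set.uIoc_subset_uIcc hy, hr⟩
  · exact Filter.Eventually.of_forall fun y hy r hr => hasDerivAt_pdt (p := (y, r))
      ((hP.differentiableOn one_ne_zero).differentiableAt
        (hst.mem_nhds ⟨hI (Set.uIoc_subset_uIcc hy), hball hr⟩))

/-- The integral of `P dx + Q dt` along the path `(x₀, t₀) → (x₀, t) → (x, t)`. -/
def rectPotential (P Q : Hyp → ℝ) (x₀ t₀ : ℝ) (p : Hyp) : ℝ :=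
  (∫ y in x₀..p.1, P (y, p.2)) + ∫ r in t₀..p.2, Q (x₀, r)

theorem hasDerivAt_rectPotential_fst (hs : IsOpen s) (hP : ContinuousOn P (s ×ˢ t))
    (hx₀ : x₀ ∈ s) (hp : p ∈ s ×ˢ t) :
    HasDerivAt (fun r => rectPotential P Q x₀ t₀ (r, p.2)) (P p) p.1 :=
  (hasDerivAt_integral_of_continuousOn hs (hP.comp_fst_slice hp.2) hx₀ hp.1).add_const
    (∫ r in t₀..p.2, Q (x₀, r))

theorem hasDerivAt_rectPotential_snd [t.OrdConnected] (hs : IsOpen s) (ht : IsOpen t)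
    (hP : ContDiffOn ℝ 1 P (s ×ˢ t)) (hQ : ContDiffOn ℝ 1 Q (s ×ˢ t))
    (hPQ : ∀ q ∈ s ×ˢ t, pdt P q = pdx Q q) (hz₀ : (x₀, t₀) ∈ s ×ˢ t)
    (hp : p ∈ s ×ˢ t) :
    HasDerivAt (fun r => rectPotential P Q x₀ t₀ (p.1, r)) (Q p) p.2 := by
  have hI : Set.uIcc x₀ p.1 ⊆ s := Set.OrdConnected.uIcc_subset ‹_› hz₀.1 hp.1
  have hst : IsOpen (s ×ˢ t) := hs.prod ht
  have hPQ_int : ∫ y in x₀..p.1, pdt P (y, p.2) = Q p - Q (x₀, p.2) := by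
    rw [intervalIntegral.integral_congr fun y hy => hPQ (y, p.2) ⟨hI hy, hp.2⟩]
    exact intervalIntegral.integral_eq_sub_of_hasDerivAt (f := fun y => Q (y, p.2))
      (fun y hy => hasDerivAt_pdx (p := (y, p.2))
        ((hQ.differentiableOn one_ne_zero).differentiableAt (hst.mem_nhds ⟨hI hy, hp.2⟩)))
      (((hQ.pdx (m := 0) hst (by simp)).continuousOn.comp_fst_slice hp.2).mono
        hI).intervalIntegrable
  have h := (hasDerivAt_integral_param hs ht hP hz₀.1 hp.1 hp.2).add
    (hasDerivAt_integral_of_continuousOn ht (hQ.continuousOn.comp_snd_slice hz₀.1) hz₀.2 hp.2)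
  rwa [hPQ_int, sub_add_cancel] at h

end Rectangle

section KleinGordon

variable {Ω : Set Hyp} {f v F g : Hyp → ℝ} {p : Hyp}

theorem pdx_pdx_mul_of_hasDerivAt (hf : ContDiffOn ℝ 2 f Ω) (hF : ContDiffOn ℝ 2 F Ω)
    (hΩ : IsOpen Ω) (hg : ∀ q ∈ Ω, HasDerivAt (fun s => g (s, q.2)) (pdt F q / f q ^ 2) q.1)
    (hp : p ∈ Ω) (hfp : f p ≠ 0) :
    pdx (pdx fun q => f q * g q) p = pdx (pdx f) p * g p + pdx (pdt F) p / f p :=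
  deriv_deriv_mul_of_hasDerivAt_div_sq (g := fun s => g (s, p.2))
    (hf.eventually_differentiableAt_fst two_ne_zero hΩ hp)
    (hasDerivAt_pdx (hf.differentiableAt_pdx hΩ hp)).differentiableAt hfp
    ((hΩ.eventually_mem_fst hp).mono fun _ hs => hg _ hs)
    (hasDerivAt_pdx (hF.differentiableAt_pdt hΩ hp)).differentiableAt

theorem pdt_pdt_mul_of_hasDerivAt (hf : ContDiffOn ℝ 2 f Ω) (hF : ContDiffOn ℝ 2 F Ω)
    (hΩ : IsOpen Ω) (hg : ∀ q ∈ Ω, HasDerivAt (fun s => g (q.1, s)) (pdx F q / f q ^ 2) q.2)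
    (hp : p ∈ Ω) (hfp : f p ≠ 0) :
    pdt (pdt fun q => f q * g q) p = pdt (pdt f) p * g p + pdt (pdx F) p / f p :=
  deriv_deriv_mul_of_hasDerivAt_div_sq (g := fun s => g (p.1, s))
    (hf.eventually_differentiableAt_snd two_ne_zero hΩ hp)
    (hasDerivAt_pdt (hf.differentiableAt_pdt hΩ hp)).differentiableAt hfp
    ((hΩ.eventually_mem_snd hp).mono fun _ hs => hg _ hs)
    (hasDerivAt_pdt (hF.differentiableAt_pdx hΩ hp)).differentiableAt

theorem waveOp_mul_of_hasDerivAt (hf : ContDiffOn ℝ 2 f Ω) (hF : ContDiffOn ℝ 2 F Ω)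
    (hΩ : IsOpen Ω) (hgx : ∀ q ∈ Ω, HasDerivAt (fun s => g (s, q.2)) (pdt F q / f q ^ 2) q.1)
    (hgt : ∀ q ∈ Ω, HasDerivAt (fun s => g (q.1, s)) (pdx F q / f q ^ 2) q.2)
    (hp : p ∈ Ω) (hfp : f p ≠ 0) :
    waveOp (fun q => f q * g q) p = waveOp f p * g p := by
  rw [waveOp, waveOp, pdx_pdx_mul_of_hasDerivAt hf hF hΩ hgx hp hfp,
    pdt_pdt_mul_of_hasDerivAt hf hF hΩ hgt hp hfp, pdx_pdt_comm hF hΩ hp]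
  ring

theorem pdt_pdt_div_sq_eq_pdx_pdx_div_sq (hf : ContDiffOn ℝ 2 f Ω) (hF : ContDiffOn ℝ 2 F Ω)
    (hΩ : IsOpen Ω) (hp : p ∈ Ω) (hfp : f p ≠ 0)
    (hwave : f p * waveOp F p = 2 * (pdx F p * pdx f p - pdt F p * pdt f p)) :
    pdt (fun q => pdt F q / f q ^ 2) p = pdx (fun q => pdx F q / f q ^ 2) p := by
  have hfd := (hf.differentiableOn two_ne_zero).differentiableAt (hΩ.mem_nhds hp)
  have ht : pdt (fun q => pdt F q / f q ^ 2) p =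
      pdt (pdt F) p / f p ^ 2 - 2 * pdt F p * pdt f p / f p ^ 3 :=
    deriv_div_sq (hasDerivAt_pdt (hF.differentiableAt_pdt hΩ hp)).differentiableAt
      (hasDerivAt_pdt hfd).differentiableAt hfp
  have hx : pdx (fun q => pdx F q / f q ^ 2) p =
      pdx (pdx F) p / f p ^ 2 - 2 * pdx F p * pdx f p / f p ^ 3 :=
    deriv_div_sq (hasDerivAt_pdx (hF.differentiableAt_pdx hΩ hp)).differentiableAt
      (hasDerivAt_pdx hfd).differentiableAt hfp
  rw [ht, hx]
  rw [waveOp] at hwave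
  field_simp
  linear_combination -hwave

theorem pdt_pdt_div_sq_eq_pdx_pdx_div_sq_of_waveOp {n : ℝ} (hf : ContDiffOn ℝ 2 f Ω)
    (hv : ContDiffOn ℝ 2 v Ω) (hΩ : IsOpen Ω) (hp : p ∈ Ω) (hfp : f p ≠ 0)
    (hfKG : waveOp f p = n * f p)
    (hvKG : waveOp v p = (-n + 2 * (pdx f p ^ 2 - pdt f p ^ 2) / f p ^ 2) * v p) :
    pdt (fun q => pdt (fun q => f q * v q) q / f q ^ 2) p =
      pdx (fun q => pdx (fun q => f q * v q) q / f q ^ 2) p := by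
  refine pdt_pdt_div_sq_eq_pdx_pdx_div_sq hf (hf.mul hv) hΩ hp hfp ?_
  have hfd := (hf.contDiffAt (hΩ.mem_nhds hp)).differentiableAt two_ne_zero
  have hvd := (hv.contDiffAt (hΩ.mem_nhds hp)).differentiableAt two_ne_zero
  rw [waveOp_mul hf hv hΩ hp, hfKG, hvKG, pdx_mul hfd hvd, pdt_mul hfd hvd]
  field_simp
  ring

theorem contDiffOn_pdt_div_sq (hF : ContDiffOn ℝ 2 F Ω) (hf : ContDiffOn ℝ 2 f Ω)
    (hΩ : IsOpen Ω) (hf0 : ∀ q ∈ Ω, f q ≠ 0) :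
    ContDiffOn ℝ 1 (fun q => pdt F q / f q ^ 2) Ω :=
  (hF.pdt hΩ le_rfl).div ((hf.of_le one_le_two).pow 2) fun q hq => pow_ne_zero 2 (hf0 q hq)

theorem contDiffOn_pdx_div_sq (hF : ContDiffOn ℝ 2 F Ω) (hf : ContDiffOn ℝ 2 f Ω)
    (hΩ : IsOpen Ω) (hf0 : ∀ q ∈ Ω, f q ≠ 0) :
    ContDiffOn ℝ 1 (fun q => pdx F q / f q ^ 2) Ω :=
  (hF.pdx hΩ le_rfl).div ((hf.of_le one_le_two).pow 2) fun q hq => pow_ne_zero 2 (hf0 q hq)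

end KleinGordon

section Vekua

variable {f u v g : Hyp → ℝ} {p : Hyp}

/-- `W = u + jv` satisfies the main Vekua equation `W_z̄ = (f_z̄ / f) W̄` at `p`. -/
def MainVekuaAt (f u v : Hyp → ℝ) (p : Hyp) : Prop :=
  dzbar (fun q => ((u q, v q) : Hyp)) p = hmul (hdiv (rzbar f p) (f p, 0)) (hconj (u p, v p))

theorem mainVekuaAt_iff (hf : DifferentiableAt ℝ f p) (hv : DifferentiableAt ℝ v p)
    (hfp : f p ≠ 0) : MainVekuaAt f u v p ↔
      f p * pdx u p = pdx f p * u p + pdt (fun q => f q * v q) p ∧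
      f p * pdt u p = pdt f p * u p + pdx (fun q => f q * v q) p := by
  have hrhs : hmul (hdiv (rzbar f p) (f p, 0)) (hconj (u p, v p)) =
      ((pdx f p * u p + pdt f p * v p) / (2 * f p),
        -(pdx f p * v p + pdt f p * u p) / (2 * f p)) := by
    simp only [hmul, hdiv, hinv, hconj, rzbar, Prod.mk.injEq]
    constructor <;> field_simp <;> ring
  rw [MainVekuaAt, hrhs, pdx_mul hf hv, pdt_mul hf hv]
  simp only [dzbar, Prod.mk.injEq]
  rw [div_eq_div_iff two_ne_zero (mul_ne_zero two_ne_zero hfp),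
    div_eq_div_iff two_ne_zero (mul_ne_zero two_ne_zero hfp)]
  exact and_congr ⟨fun h => by linear_combination h / 2, fun h => by linear_combination 2 * h⟩
    ⟨fun h => by linear_combination -h / 2, fun h => by linear_combination -2 * h⟩

theorem mainVekuaAt_mul (hf : DifferentiableAt ℝ f p) (hv : DifferentiableAt ℝ v p)
    (hfp : f p ≠ 0)
    (hgx : HasDerivAt (fun r => g (r, p.2)) (pdt (fun q => f q * v q) p / f p ^ 2) p.1)
    (hgt : HasDerivAt (fun r => g (p.1, r)) (pdx (fun q => f q * v q) p / f p ^ 2) p.2) :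
    MainVekuaAt f (fun q => f q * g q) v p := by
  have hx : pdx (fun q => f q * g q) p =
      pdx f p * g p + f p * (pdt (fun q => f q * v q) p / f p ^ 2) :=
    ((hasDerivAt_pdx hf).fun_mul hgx).deriv
  have ht : pdt (fun q => f q * g q) p =
      pdt f p * g p + f p * (pdx (fun q => f q * v q) p / f p ^ 2) :=
    ((hasDerivAt_pdt hf).fun_mul hgt).deriv
  refine (mainVekuaAt_iff hf hv hfp).2 ⟨?_, ?_⟩
  · rw [hx]; field_simp
  · rw [ht]; field_simp

theorem MainVekuaAt.hasDerivAt_div (hW : MainVekuaAt f u v p) (hu : DifferentiableAt ℝ u p)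
    (hf : DifferentiableAt ℝ f p) (hv : DifferentiableAt ℝ v p) (hfp : f p ≠ 0) :
    HasDerivAt (fun r => u (r, p.2) / f (r, p.2)) (pdt (fun q => f q * v q) p / f p ^ 2) p.1 ∧
      HasDerivAt (fun r => u (p.1, r) / f (p.1, r)) (pdx (fun q => f q * v q) p / f p ^ 2) p.2 := by
  obtain ⟨hx, ht⟩ := (mainVekuaAt_iff hf hv hfp).1 hW
  refine ⟨((hasDerivAt_pdx hu).div (hasDerivAt_pdx hf) hfp).congr_deriv ?_,
    ((hasDerivAt_pdt hu).div (hasDerivAt_pdt hf) hfp).congr_deriv ?_⟩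
  · field_simp
    linear_combination hx
  · field_simp
    linear_combination ht

theorem exists_eq_mul_add_of_mainVekuaAt {s t : Set ℝ} [s.OrdConnected] [t.OrdConnected]
    (hs : IsOpen s) (ht : IsOpen t) (hu : ContDiffOn ℝ 1 u (s ×ˢ t))
    (hf : ContDiffOn ℝ 1 f (s ×ˢ t)) (hv : ContDiffOn ℝ 1 v (s ×ˢ t))
    (hf0 : ∀ q ∈ s ×ˢ t, f q ≠ 0)
    (hgx : ∀ q ∈ s ×ˢ t,
      HasDerivAt (fun r => g (r, q.2)) (pdt (fun q => f q * v q) q / f q ^ 2) q.1)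
    (hgt : ∀ q ∈ s ×ˢ t,
      HasDerivAt (fun r => g (q.1, r)) (pdx (fun q => f q * v q) q / f q ^ 2) q.2)
    (hW : ∀ q ∈ s ×ˢ t, MainVekuaAt f u v q) :
    ∃ k : ℝ, ∀ p ∈ s ×ˢ t, u p = f p * g p + k * f p := by
  rcases (s ×ˢ t).eq_empty_or_nonempty with hempty | ⟨z, hz⟩
  · exact ⟨0, by simp [hempty]⟩
  have hdiff : ∀ {h : Hyp → ℝ}, ContDiffOn ℝ 1 h (s ×ˢ t) →
      ∀ q ∈ s ×ˢ t, DifferentiableAt ℝ h q :=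
    fun hh q hq => (hh.contDiffAt ((hs.prod ht).mem_nhds hq)).differentiableAt one_ne_zero
  have hdiv := fun q hq =>
    (hW q hq).hasDerivAt_div (hdiff hu q hq) (hdiff hf q hq) (hdiff hv q hq) (hf0 q hq)
  have hconst : ∀ p ∈ s ×ˢ t, u p / f p - g p = u z / f z - g z := fun p hp =>
    eq_of_hasDerivAt_slices_eq_zero (h := fun q => u q / f q - g q) hs ht
      (fun q hq => ((hdiv q hq).1.sub (hgx q hq)).congr_deriv (sub_self _))
      (fun q hq => ((hdiv q hq).2.sub (hgt q hq)).congr_deriv (sub_self _)) hp hz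
  refine ⟨u z / f z - g z, fun p hp => ?_⟩
  rw [← hconst p hp]
  field_simp [hf0 p hp]
  ring

end Vekua

/-- given a C² solution `v` of `□v = ηv` on an open rectangle `Ω`, where
`η = −ν + 2(f_x² − f_t²)/f²`, with `Φ₁ + jΦ₂ = j·f⁻²·∂_z̄(f·v)` and
`u = −f·[2(∫_{x₀}^{x} Φ₁(y,t) dy − ∫_{t₀}^{t} Φ₂(x₀,ξ) dξ) + c]`, the function
`W = u + jv` solves the main Vekua equation `W_z̄ = (f_z̄/f)W̄` on `Ω` and `u` solves the
Klein-Gordon equation `□u = νu`; moreover `u` is unique up to an additive term `c'·f`. -/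
theorem conjugate_metaharmonic_u (a b c d x₀ t₀ : ℝ) (Ω : Set Hyp)
    (hΩ : Ω = Set.Ioo a b ×ˢ Set.Ioo c d) (hz₀ : ((x₀, t₀) : Hyp) ∈ Ω)
    (ν f : Hyp → ℝ) (hf : ContDiffOn ℝ 2 f Ω) (hfpos : ∀ p ∈ Ω, 0 < f p)
    (hKG : ∀ p ∈ Ω, waveOp f p = ν p * f p)
    (v : Hyp → ℝ) (hv : ContDiffOn ℝ 2 v Ω)
    (hvKG : ∀ p ∈ Ω, waveOp v p =
      (-ν p + 2 * ((pdx f p) ^ 2 - (pdt f p) ^ 2) / (f p) ^ 2) * v p)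
    (Φ₁ Φ₂ : Hyp → ℝ)
    (hΦ₁ : ∀ p, Φ₁ p = -(1 / (2 * f p ^ 2)) * pdt (fun q => f q * v q) p)
    (hΦ₂ : ∀ p, Φ₂ p = (1 / (2 * f p ^ 2)) * pdx (fun q => f q * v q) p)
    (c₀ : ℝ) (u : Hyp → ℝ)
    (hu : ∀ p : Hyp, u p = -(f p) *
      (2 * ((∫ y in x₀..p.1, Φ₁ (y, p.2)) - ∫ ξ in t₀..p.2, Φ₂ (x₀, ξ)) + c₀)) :
    (∀ p ∈ Ω, dzbar (fun q => ((u q, v q) : Hyp)) p =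
      hmul (hdiv (rzbar f p) (f p, 0)) (hconj (u p, v p))) ∧
    (∀ p ∈ Ω, waveOp u p = ν p * u p) ∧
    (∀ u' : Hyp → ℝ, ContDiffOn ℝ 1 u' Ω →
      (∀ p ∈ Ω, dzbar (fun q => ((u' q, v q) : Hyp)) p =
        hmul (hdiv (rzbar f p) (f p, 0)) (hconj (u' p, v p))) →
      ∃ c' : ℝ, ∀ p ∈ Ω, u' p = u p + c' * f p) := by
  subst hΩ
  set R := Set.Ioo a b ×ˢ Set.Ioo c d
  set F : Hyp → ℝ := fun q => f q * v q
  set P : Hyp → ℝ := fun q => pdt F q / f q ^ 2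
  set Q : Hyp → ℝ := fun q => pdx F q / f q ^ 2
  set ψ := rectPotential P Q x₀ t₀
  have hopen : IsOpen R := isOpen_Ioo.prod isOpen_Ioo
  have hf0 : ∀ q ∈ R, f q ≠ 0 := fun q hq => (hfpos q hq).ne'
  have hP : ContDiffOn ℝ 1 P R := contDiffOn_pdt_div_sq (hf.mul hv) hf hopen hf0
  have hQ : ContDiffOn ℝ 1 Q R := contDiffOn_pdx_div_sq (hf.mul hv) hf hopen hf0
  have hclosed : ∀ q ∈ R, pdt P q = pdx Q q := fun q hq =>
    pdt_pdt_div_sq_eq_pdx_pdx_div_sq_of_waveOp hf hv hopen hq (hf0 q hq) (hKG q hq) (hvKG q hq)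
  have hψx : ∀ q ∈ R, HasDerivAt (fun r => ψ (r, q.2) - c₀) (P q) q.1 :=
    fun q hq => (hasDerivAt_rectPotential_fst isOpen_Ioo hP.continuousOn hz₀.1 hq).sub_const c₀
  have hψt : ∀ q ∈ R, HasDerivAt (fun r => ψ (q.1, r) - c₀) (Q q) q.2 :=
    fun q hq =>
      (hasDerivAt_rectPotential_snd isOpen_Ioo isOpen_Ioo hP hQ hclosed hz₀ hq).sub_const c₀
  obtain rfl : u = fun q => f q * (ψ q - c₀) := by
    have hΦ₁P : ∀ q, Φ₁ q = -(1 / 2) * P q := fun q => by rw [hΦ₁]; ring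
    have hΦ₂Q : ∀ q, Φ₂ q = 1 / 2 * Q q := fun q => by rw [hΦ₂]; ring
    funext q
    simp only [hu, hΦ₁P, hΦ₂Q, intervalIntegral.integral_const_mul, ψ, rectPotential]
    ring
  have hdiff : ∀ {g : Hyp → ℝ}, ContDiffOn ℝ 2 g R → ∀ q ∈ R, DifferentiableAt ℝ g q :=
    fun hg _ hq => (hg.contDiffAt (hopen.mem_nhds hq)).differentiableAt two_ne_zero
  refine ⟨fun p hp => ?_, fun p hp => ?_, fun u' hu' => ?_⟩
  · exact mainVekuaAt_mul (hdiff hf p hp) (hdiff hv p hp) (hf0 p hp) (hψx p hp) (hψt p hp)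
  · rw [waveOp_mul_of_hasDerivAt hf (hf.mul hv) hopen hψx hψt hp (hf0 p hp), hKG p hp]
    ring
  · exact exists_eq_mul_add_of_mainVekuaAt isOpen_Ioo isOpen_Ioo hu' (hf.of_le one_le_two)
      (hv.of_le one_le_two) hf0 hψx hψt
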